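/- For a domain R, an ideal I ⊆ R, and an element f ∈ R, the intersection Rf⁻¹ ∩ Γ(R,I) equals (Rf : I^∞)·f⁻¹, where (Rf : I^∞) = {r ∈ R : for every g ∈ I there exists n ∈ ℕ with r·gⁿ ∈ Rf}. -/

import Mathlib

noncomputable section

def locAt (R K : Type) [CommRing R] [Field K] [Algebra R K] (r : R) : Subring K :=
  (Algebra.adjoin R {(algebraMap R K r)⁻¹}).toSubring

def Gamma (R K : Type) [CommRing R] [Field K] [Algebra R K] (I : Ideal R) : Set K :=
  ⋂ (r : R) (_ : r ∈ I) (_ : r ≠ 0), (locAt R K r : Set K)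

/-- The saturation `(Rf : I^∞) = {r ∈ R | ∀ g ∈ I, ∃ n, r·gⁿ ∈ Rf}`. -/
def satur (R : Type) [CommRing R] (I : Ideal R) (f : R) : Set R :=
  {r : R | ∀ g ∈ I, ∃ n : ℕ, r * g ^ n ∈ Ideal.span {f}}

section

variable {R K : Type} [CommRing R] [Field K] [Algebra R K]

theorem mem_locAt_iff {g : R} (hg : algebraMap R K g ≠ 0) {x : K} :
    x ∈ locAt R K g ↔ ∃ n : ℕ, x * algebraMap R K g ^ n ∈ (algebraMap R K).range := by
  constructor
  · intro hx
    induction hx using Algebra.adjoin_induction with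
    | mem y hy =>
      rw [Set.mem_singleton_iff.mp hy]
      exact ⟨1, 1, by rw [pow_one, inv_mul_cancel₀ hg, map_one]⟩
    | algebraMap s => exact ⟨0, s, by rw [pow_zero, mul_one]⟩
    | add a b _ _ ha hb =>
      obtain ⟨m, s, hs⟩ := ha
      obtain ⟨n, t, ht⟩ := hb
      refine ⟨m + n, s * g ^ n + t * g ^ m, ?_⟩
      simp only [map_add, map_mul, map_pow, hs, ht]
      ring
    | mul a b _ _ ha hb =>
      obtain ⟨m, s, hs⟩ := ha
      obtain ⟨n, t, ht⟩ := hb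
      refine ⟨m + n, s * t, ?_⟩
      rw [map_mul, hs, ht]
      ring
  · rintro ⟨n, s, hs⟩
    have hx : x = algebraMap R K s * (algebraMap R K g)⁻¹ ^ n := by
      rw [hs, inv_pow, mul_inv_cancel_right₀ (pow_ne_zero n hg)]
    rw [hx, locAt, Subalgebra.mem_toSubring]
    exact mul_mem (Subalgebra.algebraMap_mem _ s)
      (pow_mem (Algebra.subset_adjoin (Set.mem_singleton _)) n)

variable [FaithfulSMul R K]

theorem div_mem_locAt_iff {f g : R} (hf : f ≠ 0) (hg : g ≠ 0) (r : R) :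
    algebraMap R K r / algebraMap R K f ∈ locAt R K g ↔ ∃ n : ℕ, r * g ^ n ∈ Ideal.span {f} := by
  have hf' : algebraMap R K f ≠ 0 := (FaithfulSMul.algebraMap_eq_zero_iff R K).not.mpr hf
  have hg' : algebraMap R K g ≠ 0 := (FaithfulSMul.algebraMap_eq_zero_iff R K).not.mpr hg
  simp only [mem_locAt_iff hg', RingHom.mem_range, Ideal.mem_span_singleton']
  refine exists_congr fun n => exists_congr fun s => ?_
  rw [div_mul_eq_mul_div, eq_div_iff hf', ← map_pow, ← map_mul, ← map_mul,
    (FaithfulSMul.algebraMap_injective R K).eq_iff]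

theorem div_mem_Gamma_iff (I : Ideal R) {f : R} (hf : f ≠ 0) (r : R) :
    algebraMap R K r / algebraMap R K f ∈ Gamma R K I ↔ r ∈ satur R I f := by
  simp only [Gamma, Set.mem_iInter, SetLike.mem_coe, satur, Set.mem_ofPred_eq]
  refine forall₂_congr fun g _ => ?_
  by_cases hg : g = 0
  · subst hg
    exact iff_of_true (fun h => (h rfl).elim) ⟨1, by simp⟩
  · rw [forall_prop_of_true hg, div_mem_locAt_iff hf hg]

end

theorem inter_gamma_eq_satur_general (R K : Type) [CommRing R] [Field K] [Algebra R K]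
    [IsFractionRing R K] (I : Ideal R) (f : R) (hf : f ≠ 0) :
    {x : K | ∃ r : R, x = algebraMap R K r / algebraMap R K f} ∩ Gamma R K I
      = {x : K | ∃ r ∈ satur R I f, x = algebraMap R K r / algebraMap R K f} := by
  ext x
  constructor
  · rintro ⟨⟨r, rfl⟩, hx⟩
    exact ⟨r, (div_mem_Gamma_iff I hf r).mp hx, rfl⟩
  · rintro ⟨r, hr, rfl⟩
    exact ⟨⟨r, rfl⟩, (div_mem_Gamma_iff I hf r).mpr hr⟩

/-- `Rf⁻¹ ∩ Γ(R,I) = (Rf : I^∞)·f⁻¹` inside the fraction field of `R`. -/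
theorem inter_gamma_eq_satur (R K : Type) [CommRing R] [IsDomain R] [Field K] [Algebra R K]
    [IsFractionRing R K] (I : Ideal R) (f : R) (hf : f ≠ 0) :
    {x : K | ∃ r : R, x = algebraMap R K r / algebraMap R K f} ∩ Gamma R K I
      = {x : K | ∃ r ∈ satur R I f, x = algebraMap R K r / algebraMap R K f} :=
  inter_gamma_eq_satur_general R K I f hf
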